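/- arXiv:2204.01433 — 2 statements merged into one kernel-verified Lean document; each statement's English description precedes it below -/
import Mathlib

section
/- In the butterfly network with source 1 and sinks 6 and 7, there is no routing scheme (i.e., an assignment of one of the two source symbols to each edge, where each node can only forward symbols it has received) under which both sink 6 and sink 7 simultaneously receive both source symbols a and b in a single network use. -/
/-- The edges of the butterfly network. -/
def butterflyEdges : List (ℕ × ℕ) :=
  [(1, 2), (1, 3), (2, 4), (3, 4), (4, 5), (5, 6), (5, 7), (2, 6), (3, 7)]

/-- In the butterfly network with source `1` and sinks `6` and `7`, there is no routing
scheme — an assignment `σ` of one of the two source symbols (`Bool`: `false = a`,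
`true = b`) to each edge, where each non-source node can only forward symbols it has
received on incoming edges — under which both sinks `6` and `7` simultaneously receive
both source symbols in a single network use. -/
theorem butterfly_no_routing :
    ¬ ∃ σ : ℕ × ℕ → Bool,
      (∀ e ∈ butterflyEdges, e.1 ≠ 1 → ∃ d ∈ butterflyEdges, d.2 = e.1 ∧ σ d = σ e) ∧
      (∀ b : Bool, ∃ e ∈ butterflyEdges, e.2 = 6 ∧ σ e = b) ∧
      (∀ b : Bool, ∃ e ∈ butterflyEdges, e.2 = 7 ∧ σ e = b) := by
  rintro ⟨σ, hf, h6, h7⟩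
  have e24 : σ (1,2) = σ (2,4) := by
    obtain ⟨d, hd, hd2, hds⟩ := hf (2,4) (by simp [butterflyEdges]) (by norm_num)
    simp only [butterflyEdges] at hd; fin_cases hd <;> first | exact hds | exact Or.inl hds | exact Or.inr hds | exact Or.inl hds.symm | exact Or.inr hds.symm | simp at hd2
  have e34 : σ (1,3) = σ (3,4) := by
    obtain ⟨d, hd, hd2, hds⟩ := hf (3,4) (by simp [butterflyEdges]) (by norm_num)
    simp only [butterflyEdges] at hd; fin_cases hd <;> first | exact hds | exact Or.inl hds | exact Or.inr hds | exact Or.inl hds.symm | exact Or.inr hds.symm | simp at hd2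
  have e26 : σ (1,2) = σ (2,6) := by
    obtain ⟨d, hd, hd2, hds⟩ := hf (2,6) (by simp [butterflyEdges]) (by norm_num)
    simp only [butterflyEdges] at hd; fin_cases hd <;> first | exact hds | exact Or.inl hds | exact Or.inr hds | exact Or.inl hds.symm | exact Or.inr hds.symm | simp at hd2
  have e37 : σ (1,3) = σ (3,7) := by
    obtain ⟨d, hd, hd2, hds⟩ := hf (3,7) (by simp [butterflyEdges]) (by norm_num)
    simp only [butterflyEdges] at hd; fin_cases hd <;> first | exact hds | exact Or.inl hds | exact Or.inr hds | exact Or.inl hds.symm | exact Or.inr hds.symm | simp at hd2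
  have e56 : σ (4,5) = σ (5,6) := by
    obtain ⟨d, hd, hd2, hds⟩ := hf (5,6) (by simp [butterflyEdges]) (by norm_num)
    simp only [butterflyEdges] at hd; fin_cases hd <;> first | exact hds | exact Or.inl hds | exact Or.inr hds | exact Or.inl hds.symm | exact Or.inr hds.symm | simp at hd2
  have e57 : σ (4,5) = σ (5,7) := by
    obtain ⟨d, hd, hd2, hds⟩ := hf (5,7) (by simp [butterflyEdges]) (by norm_num)
    simp only [butterflyEdges] at hd; fin_cases hd <;> first | exact hds | exact Or.inl hds | exact Or.inr hds | exact Or.inl hds.symm | exact Or.inr hds.symm | simp at hd2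
  have h45 : σ (4,5) = σ (2,4) ∨ σ (4,5) = σ (3,4) := by
    obtain ⟨d, hd, hd2, hds⟩ := hf (4,5) (by simp [butterflyEdges]) (by norm_num)
    simp only [butterflyEdges] at hd; fin_cases hd <;> first | exact hds | exact Or.inl hds | exact Or.inr hds | exact Or.inl hds.symm | exact Or.inr hds.symm | simp at hd2
  have s6 : ∀ b : Bool, σ (5,6) = b ∨ σ (2,6) = b := by
    intro b
    obtain ⟨e, he, he2, hes⟩ := h6 b
    simp only [butterflyEdges] at he; fin_cases he <;> first | exact Or.inl hes | exact Or.inr hes | simp at he2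
  have s7 : ∀ b : Bool, σ (5,7) = b ∨ σ (3,7) = b := by
    intro b
    obtain ⟨e, he, he2, hes⟩ := h7 b
    simp only [butterflyEdges] at he; fin_cases he <;> first | exact Or.inl hes | exact Or.inr hes | simp at he2
  have t6 := s6 true; have f6 := s6 false
  have t7 := s7 true; have f7 := s7 false
  cases h : σ (4,5) <;> simp_all
end

section
/- In the modified linear multicast construction on an acyclic paths line-graph, at each step the following invariant can be maintained: for every sink t ∈ T and every set of r LG-nodes lying on the r distinct paths to t (one node per path, the most downstream processed node of each path), the r global encoding kernel vectors held by these nodes are linearly independent in F^r, provided |F| > |T|. -/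
/-!
Inside `W`, the vectors that fail for the sink `t` form the proper subspace `W ∩ span (B t)`.
By B. H. Neumann's lemma, a cover of a group by finitely many subgroups contains one of index at
most the number of subgroups, while a proper subspace over `F` has index at least `|F|`; so fewer
than `|F|` proper subspaces never cover `W`, and any `w ∈ W` outside all of them extends every
`B t` to an independent family.
-/

namespace Submodule

variable {k M ι : Type*} [DivisionRing k] [Fintype k] [AddCommGroup M] [Module k M]

theorem card_le_index_of_ne_top {p : Submodule k M} [p.toAddSubgroup.FiniteIndex]
    (hp : p ≠ ⊤) : Fintype.card k ≤ p.toAddSubgroup.index := by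
  have : Finite (M ⧸ p) := AddSubgroup.finite_quotient_of_finiteIndex
  have : Nontrivial (M ⧸ p) := Quotient.nontrivial_iff.mpr hp
  obtain ⟨x, hx⟩ := exists_ne (0 : M ⧸ p)
  rw [AddSubgroup.index, ← Nat.card_eq_fintype_card]
  exact Nat.card_le_card_of_injective (fun c : k => c • x) (smul_left_injective k hx)

theorem exists_forall_notMem_of_card_lt_card {s : Finset ι} (hs : s.card < Fintype.card k)
    {p : ι → Submodule k M} (hp : ∀ i ∈ s, p i ≠ ⊤) : ∃ x : M, ∀ i ∈ s, x ∉ p i := by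
  by_contra! hcover
  obtain ⟨i, hi, hfin, hindex⟩ := AddSubgroup.exists_index_le_card_of_leftCoset_cover
    (H := fun i => (p i).toAddSubgroup) (g := fun _ => (0 : M)) (s := s) <| by
      refine Set.eq_univ_of_forall fun x => ?_
      obtain ⟨i, hi, hx⟩ := hcover x
      exact Set.mem_biUnion hi ⟨x, hx, zero_vadd M x⟩
  exact hs.not_ge <| (card_le_index_of_ne_top (hp i hi)).trans hindex

theorem exists_mem_forall_notMem_of_card_lt_card {s : Finset ι} (hs : s.card < Fintype.card k)
    {W : Submodule k M} {q : ι → Submodule k M} (hq : ∀ i ∈ s, ¬ W ≤ q i) :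
    ∃ w ∈ W, ∀ i ∈ s, w ∉ q i := by
  obtain ⟨w, hw⟩ := exists_forall_notMem_of_card_lt_card hs (p := fun i => (q i).comap W.subtype)
    fun i hi => mt comap_subtype_eq_top.mp (hq i hi)
  exact ⟨w, w.2, hw⟩

end Submodule

theorem linear_multicast_inductive_step_general {F ι : Type*} [Field F] [Fintype F]
    (r : ℕ) (T : Finset ι) (hF : T.card < Fintype.card F)
    (W : Submodule F (Fin r → F)) (B : ι → Fin (r - 1) → Fin r → F)
    (hB : ∀ t ∈ T, LinearIndependent F (B t))
    (hW : ∀ t ∈ T, ¬ W ≤ Submodule.span F (Set.range (B t))) :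
    ∃ w ∈ W, ∀ t ∈ T,
      LinearIndependent F (fun i : Option (Fin (r - 1)) => i.elim w (B t)) := by
  obtain ⟨w, hwW, hw⟩ := Submodule.exists_mem_forall_notMem_of_card_lt_card hF hW
  refine ⟨w, hwW, fun t ht => ?_⟩
  convert (hB t ht).option (hw t ht) using 1
  · funext i
    cases i <;> rfl
  · rfl

/-- The inductive step of the modified linear multicast construction on an acyclic paths
line-graph: the newly processed LG-node must receive a vector lying in the span `W` of
the vectors of its predecessors, and for each sink `t ∈ T` the `r - 1` vectors `B t`
currently held by the other paths to `t` are linearly independent and do not (together)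
absorb `W`. Provided `|F| > |T|`, a vector `w ∈ W` can be chosen so that for every sink
`t ∈ T` the resulting `r` vectors (`w` together with `B t`) are linearly independent in
`F^r` — i.e. the invariant can be maintained at each step. -/
theorem linear_multicast_inductive_step {F ι : Type*} [Field F] [Fintype F] [DecidableEq ι]
    (r : ℕ) (T : Finset ι) (hF : T.card < Fintype.card F)
    (W : Submodule F (Fin r → F)) (B : ι → Fin (r - 1) → Fin r → F)
    (hB : ∀ t ∈ T, LinearIndependent F (B t))
    (hW : ∀ t ∈ T, ¬ W ≤ Submodule.span F (Set.range (B t))) :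
    ∃ w ∈ W, ∀ t ∈ T,
      LinearIndependent F (fun i : Option (Fin (r - 1)) => i.elim w (B t)) :=
  linear_multicast_inductive_step_general r T hF W B hB hW
end
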